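/- arXiv:2605.25323 — 2 statements merged into one kernel-verified Lean document; each statement's English description precedes it below -/
import Mathlib

section
/- Let G be a finite graph in which exactly four vertices v1, v2, v3, v4 have odd degree and all other vertices have even degree. Suppose v1, v2, v3, v4 all lie in the same connected component of G. If P is any simple path in G from v1 to v3, then in the graph G with the edges of P removed, the vertices v2 and v4 lie in the same connected component; consequently G contains two edge-disjoint paths, one from v1 to v3 and one from v2 to v4. -/
open SimpleGraph Finset

/-!
Deleting the edges of a trail from `v1` to `v3` lowers every degree by the number of trail
edges at that vertex, which is odd exactly at the two ends. So in the remaining graph the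
odd-degree vertices are exactly `v2` and `v4`. By the handshake lemma applied to the connected
component of `v2`, that component contains a second odd-degree vertex, which must be `v4`.
-/

namespace SimpleGraph

variable {V : Type*} [DecidableEq V] {G : SimpleGraph V}

theorem Reachable.exists_isPath_of_deleteEdges {s : Set (Sym2 V)} {u v : V}
    (h : (G.deleteEdges s).Reachable u v) :
    ∃ q : G.Walk u v, q.IsPath ∧ ∀ e ∈ q.edges, e ∉ s := by
  obtain ⟨q⟩ := h
  refine ⟨q.toPath.1.mapLe (deleteEdges_le s), (Walk.isPath_mapLe _).mpr q.toPath.2, ?_⟩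
  intro e he
  rw [Walk.edges_mapLe_eq_edges] at he
  exact ((edgeSet_deleteEdges s ▸ q.toPath.1.edges_subset_edgeSet he) : e ∈ G.edgeSet \ s).2

variable [Fintype V] [DecidableRel G.Adj]

lemma ConnectedComponent.degree_induce_supp (C : G.ConnectedComponent) (v : C.supp)
    [Fintype ((G.induce C.supp).neighborSet v)] :
    (G.induce C.supp).degree v = G.degree v := by
  convert degree_induce_of_neighborSet_subset fun _ hw ↦ C.mem_supp_of_adj_mem_supp v.2 hw

theorem exists_reachable_ne_odd_degree (v : V) (hv : Odd (G.degree v)) :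
    ∃ w, w ≠ v ∧ G.Reachable v w ∧ Odd (G.degree w) := by
  classical
  set C := G.connectedComponentMk v
  have hC (x : C.supp) : (G.induce C.supp).degree x = G.degree x := C.degree_induce_supp x
  obtain ⟨⟨w, hwC⟩, hwv, hw⟩ := (G.induce C.supp).exists_ne_odd_degree_of_exists_odd_degree
    ⟨v, rfl⟩ (by rwa [hC])
  exact ⟨w, fun h ↦ hwv (Subtype.ext h), ConnectedComponent.exact ((C.mem_supp_iff w).mp hwC).symm,
    by rwa [hC] at hw⟩

namespace Walk

lemma IsTrail.countP_edges_mem_eq_card {u w : V} {p : G.Walk u w} (hp : p.IsTrail) (x : V) :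
    p.edges.countP (x ∈ ·) = #{y ∈ G.neighborFinset x | s(x, y) ∈ p.edges} := by
  rw [List.countP_eq_length_filter, ← List.toFinset_card_of_nodup (hp.edges_nodup.filter _)]
  refine (card_bij (fun y _ ↦ s(x, y)) ?_ ?_ ?_).symm
  · intro y hy
    simp only [mem_filter, mem_neighborFinset] at hy
    simp [hy.2]
  · intro a _ b _ hab
    exact Sym2.congr_right.mp hab
  · intro e he
    simp only [List.mem_toFinset, List.mem_filter, decide_eq_true_eq] at he
    obtain ⟨hep, hxe⟩ := he
    refine ⟨Sym2.Mem.other' hxe, ?_, Sym2.other_spec' hxe⟩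
    have hedge := p.edges_subset_edgeSet hep
    rw [← Sym2.other_spec' hxe] at hedge hep
    simp only [mem_filter, mem_neighborFinset]
    exact ⟨hedge, hep⟩

lemma IsTrail.degree_deleteEdges_add_countP {u w : V} {p : G.Walk u w} (hp : p.IsTrail) (x : V)
    [DecidableRel (G.deleteEdges {e | e ∈ p.edges}).Adj] :
    (G.deleteEdges {e | e ∈ p.edges}).degree x + p.edges.countP (x ∈ ·) = G.degree x := by
  have hnbr : (G.deleteEdges {e | e ∈ p.edges}).neighborFinset x
      = {y ∈ G.neighborFinset x | s(x, y) ∉ p.edges} := by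
    ext y
    simp
  rw [← card_neighborFinset_eq_degree, ← card_neighborFinset_eq_degree, hnbr,
    hp.countP_edges_mem_eq_card, add_comm]
  exact card_filter_add_card_filter_not _

theorem IsTrail.odd_degree_deleteEdges_iff {u w : V} {p : G.Walk u w} (hp : p.IsTrail)
    (huw : u ≠ w) (x : V) [DecidableRel (G.deleteEdges {e | e ∈ p.edges}).Adj] :
    Odd ((G.deleteEdges {e | e ∈ p.edges}).degree x) ↔ (Odd (G.degree x) ↔ x ≠ u ∧ x ≠ w) := by
  have h := hp.even_countP_edges_iff x
  rw [← hp.degree_deleteEdges_add_countP x, Nat.odd_add]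
  tauto

end Walk

end SimpleGraph

theorem stmt_4_general {V : Type*} [Fintype V] [DecidableEq V] (G : SimpleGraph V)
    [DecidableRel G.Adj] (v1 v2 v3 v4 : V)
    (hdistinct : [v1, v2, v3, v4].Nodup)
    (hodd : {v : V | Odd (G.degree v)} = {v1, v2, v3, v4})
    (p : G.Walk v1 v3) (hp : p.IsPath) :
    (G.deleteEdges {e | e ∈ p.edges}).Reachable v2 v4 ∧
    ∃ q : G.Walk v2 v4, q.IsPath ∧ ∀ e ∈ q.edges, e ∉ p.edges := by
  classical
  simp only [List.nodup_cons, List.mem_cons, List.not_mem_nil,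
    or_false, List.nodup_nil, and_true, not_or] at hdistinct
  obtain ⟨⟨h12, h13, h14⟩, ⟨h23, h24⟩, h34⟩ := hdistinct
  have hG (x : V) : Odd (G.degree x) ↔ x = v1 ∨ x = v2 ∨ x = v3 ∨ x = v4 := by
    simpa using Set.ext_iff.mp hodd x
  have hG' (x : V) : Odd ((G.deleteEdges {e | e ∈ p.edges}).degree x) ↔ x = v2 ∨ x = v4 := by
    rw [hp.isTrail.odd_degree_deleteEdges_iff h13 x, hG x]
    grind
  obtain ⟨w, hw2, hreach, hw⟩ := exists_reachable_ne_odd_degree v2 ((hG' v2).mpr (.inl rfl))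
  obtain rfl : w = v4 := ((hG' w).mp hw).resolve_left hw2
  exact ⟨hreach, hreach.exists_isPath_of_deleteEdges⟩

/-- If a finite graph has exactly four odd-degree vertices `v1,v2,v3,v4`, all in
the same connected component, then removing the edges of any simple path from
`v1` to `v3` leaves `v2` and `v4` in the same connected component; consequently
`G` contains two edge-disjoint paths, one from `v1` to `v3` and one from `v2`
to `v4`. -/
theorem stmt_4 {V : Type*} [Fintype V] [DecidableEq V] (G : SimpleGraph V)
    [DecidableRel G.Adj] (v1 v2 v3 v4 : V)
    (hdistinct : [v1, v2, v3, v4].Nodup)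
    (hodd : {v : V | Odd (G.degree v)} = {v1, v2, v3, v4})
    (hconn : G.Reachable v1 v2 ∧ G.Reachable v1 v3 ∧ G.Reachable v1 v4)
    (p : G.Walk v1 v3) (hp : p.IsPath) :
    (G.deleteEdges {e | e ∈ p.edges}).Reachable v2 v4 ∧
    ∃ q : G.Walk v2 v4, q.IsPath ∧ ∀ e ∈ q.edges, e ∉ p.edges :=
  stmt_4_general G v1 v2 v3 v4 hdistinct hodd p hp
end

section
/- Let π be a probability distribution on a finite set Ω, let C ⊆ Ω, and suppose there is a family of injective-image maps witnessing: a function Ψ: C → 2^{Ω × B} for a finite set B, such that (i) Ψ(σ) ∩ Ψ(σ′) = ∅ for distinct σ, σ′ ∈ C, (ii) |Ψ(σ)| ≥ N for all σ ∈ C, and (iii) for every (σ″, b) ∈ Ψ(σ), π(σ″) ≥ λ·π(σ). Then π(C) ≤ |B| / (N·λ). -/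
open Finset

/-- The abstract Peierls argument with side information: if `Ψ` maps each
`σ ∈ C` to a set of at least `N` pairs `(σ″, b) ∈ Ω × B`, the images of
distinct configurations are disjoint, and each image configuration satisfies
`π(σ″) ≥ λ·π(σ)`, then `π(C) ≤ |B| / (N·λ)`. -/
theorem stmt_18 {Ω B : Type*} [Fintype Ω] [Fintype B] [DecidableEq Ω] [DecidableEq B]
    (π : Ω → ℝ) (hπnonneg : ∀ x, 0 ≤ π x) (hπsum : ∑ x, π x = 1)
    (C : Finset Ω) (Ψ : Ω → Finset (Ω × B)) (N lam : ℝ)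
    (hN : 1 ≤ N) (hlam : 0 < lam)
    (hdisj : ∀ σ ∈ C, ∀ σ' ∈ C, σ ≠ σ' → Disjoint (Ψ σ) (Ψ σ'))
    (hsize : ∀ σ ∈ C, N ≤ (Ψ σ).card)
    (hweight : ∀ σ ∈ C, ∀ q ∈ Ψ σ, lam * π σ ≤ π q.1) :
    ∑ σ ∈ C, π σ ≤ (Fintype.card B : ℝ) / (N * lam) := by
  have hNlam : 0 < N * lam := mul_pos (lt_of_lt_of_le one_pos hN) hlam
  rw [le_div_iff₀ hNlam]
  have h1 : (∑ σ ∈ C, π σ) * (N * lam) ≤ ∑ σ ∈ C, ∑ q ∈ Ψ σ, π q.1 := by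
    rw [sum_mul]
    apply sum_le_sum
    intro σ hσ
    calc π σ * (N * lam) ≤ π σ * (((Ψ σ).card : ℝ) * lam) := by
          apply mul_le_mul_of_nonneg_left _ (hπnonneg σ)
          exact mul_le_mul_of_nonneg_right (hsize σ hσ) hlam.le
      _ = ∑ _q ∈ Ψ σ, lam * π σ := by
          rw [sum_const, nsmul_eq_mul]; ring
      _ ≤ ∑ q ∈ Ψ σ, π q.1 := sum_le_sum (fun q hq => hweight σ hσ q hq)
  have h2 : ∑ σ ∈ C, ∑ q ∈ Ψ σ, π q.1 = ∑ q ∈ C.biUnion Ψ, π q.1 :=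
    (sum_biUnion (fun σ hσ σ' hσ' h => hdisj σ hσ σ' hσ' h)).symm
  have h3 : ∑ q ∈ C.biUnion Ψ, π q.1 ≤ ∑ q : Ω × B, π q.1 :=
    sum_le_sum_of_subset_of_nonneg (subset_univ _) (fun q _ _ => hπnonneg q.1)
  have h4 : ∑ q : Ω × B, π q.1 = (Fintype.card B : ℝ) := by
    rw [Fintype.sum_prod_type]
    simp only [sum_const, card_univ, nsmul_eq_mul]
    rw [← mul_sum, hπsum, mul_one]
  linarith
end
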